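/- arXiv:2502.09871 — 2 statements merged into one kernel-verified Lean document; each statement's English description precedes it below -/
import Mathlib

section
/- Let E be a metric space, δ > 0, 0 < ε < 1, and let γ : [0, L] → E be a curve parametrized by arc length satisfying the large-scale invertibility condition: d(γ(s), γ(t)) > ε·min(|s−t|, L−|s−t|) whenever min(|s−t|, L−|s−t|) ≥ δ (using the circle distance d_γ(s,t) = min(|s−t|, L−|s−t|)). Then for all x ∈ E and r ≥ δ/2, the Lebesgue measure of {t ∈ [0, L] : d(x, γ(t)) ≤ r} is at most 4(1 + ε⁻¹)·r. -/
/-!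
Fix a parameter `s` with `γ s` in the ball. For any other such `t`, `d(γ s, γ t) ≤ 2r`, so
either `d_γ(s, t) < δ ≤ 2r` or, by large-scale invertibility, `ε d_γ(s, t) < 2r`. Hence the
set lies in the `d_γ`-ball of radius `D = 2r + 2r/ε` about `s`, and such a ball meets `[0, L]`
in a set of length at most `2D = 4(1 + ε⁻¹) r`.
-/

open MeasureTheory Set

def circleDist (L s t : ℝ) : ℝ := min |s - t| (L - |s - t|)

theorem volume_setOf_circleDist_le {L s : ℝ} (hs : s ∈ Icc 0 L) {D : ℝ} (hD : 0 ≤ D) :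
    volume {t ∈ Icc 0 L | circleDist L s t ≤ D} ≤ ENNReal.ofReal (2 * D) := by
  obtain ⟨hs0, hsL⟩ := hs
  have hcover : {t ∈ Icc 0 L | circleDist L s t ≤ D} ⊆
      Icc (max (s - D) 0) (min (s + D) L) ∪ (Icc 0 (s + D - L) ∪ Icc (s - D + L) L) := by
    rintro t ⟨⟨ht0, htL⟩, hdist⟩
    rcases min_le_iff.mp hdist with hnear | hfar
    · obtain ⟨h₁, h₂⟩ := abs_le.mp hnear
      exact Or.inl ⟨max_le (by linarith) ht0, le_min (by linarith) htL⟩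
    · rcases le_total t s with hts | hst
      · rw [abs_of_nonneg (sub_nonneg.mpr hts)] at hfar
        exact Or.inr (Or.inl ⟨ht0, by linarith⟩)
      · rw [abs_of_nonpos (sub_nonpos.mpr hst)] at hfar
        exact Or.inr (Or.inr ⟨by linarith, htL⟩)
  have hmiddle : 0 ≤ min (s + D) L - max (s - D) 0 :=
    sub_nonneg.mpr <|
      le_min (max_le (by linarith) (by linarith)) (max_le (by linarith) (by linarith))
  -- The two wrap-around pieces make up exactly what the middle interval loses to clipping.
  have hlength :
      min (s + D) L - max (s - D) 0 + (max (s + D - L) 0 + max (D - s) 0) = 2 * D := by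
    rcases min_cases (s + D) L with h₁ | h₁ <;>
    rcases max_cases (s - D) 0 with h₂ | h₂ <;>
    rcases max_cases (s + D - L) 0 with h₃ | h₃ <;>
    rcases max_cases (D - s) 0 with h₄ | h₄ <;>
    linarith
  calc volume {t ∈ Icc 0 L | circleDist L s t ≤ D}
      ≤ volume (Icc (max (s - D) 0) (min (s + D) L)) +
          (volume (Icc 0 (s + D - L)) + volume (Icc (s - D + L) L)) :=
        (measure_mono hcover).trans <|
          (measure_union_le _ _).trans (add_le_add_right (measure_union_le _ _) _)
    _ = ENNReal.ofReal (min (s + D) L - max (s - D) 0) +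
          (ENNReal.ofReal (max (s + D - L) 0) + ENNReal.ofReal (max (D - s) 0)) := by
        simp only [Real.volume_Icc, ENNReal.ofReal_max, ENNReal.ofReal_zero, zero_le,
          sup_of_le_left, sub_zero, show L - (s - D + L) = D - s by ring]
    _ = ENNReal.ofReal (2 * D) := by
        rw [← ENNReal.ofReal_add (le_max_right _ _) (le_max_right _ _),
          ← ENNReal.ofReal_add hmiddle (by positivity), hlength]

theorem stmt3_general {E : Type*} [MetricSpace E] (L δ ε : ℝ)
    (hε0 : 0 < ε)
    (γ : ℝ → E)
    (hlsi : ∀ s ∈ Set.Icc (0:ℝ) L, ∀ t ∈ Set.Icc (0:ℝ) L,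
      δ ≤ min |s - t| (L - |s - t|) →
        ε * min |s - t| (L - |s - t|) < dist (γ s) (γ t)) :
    ∀ x : E, ∀ r : ℝ, δ / 2 ≤ r →
      volume {t ∈ Set.Icc (0:ℝ) L | dist x (γ t) ≤ r}
        ≤ ENNReal.ofReal (4 * (1 + ε⁻¹) * r) := by
  intro x r hr
  rcases eq_empty_or_nonempty {t ∈ Icc 0 L | dist x (γ t) ≤ r} with hempty | ⟨s, hs, hsx⟩
  · rw [hempty, measure_empty]
    exact zero_le
  have hr0 : 0 ≤ r := dist_nonneg.trans hsx
  have hrε : 0 ≤ 2 * r / ε := by positivity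
  have hnear : ∀ t ∈ Icc 0 L, dist x (γ t) ≤ r → circleDist L s t ≤ 2 * r + 2 * r / ε := by
    intro t ht htx
    have hst : dist (γ s) (γ t) ≤ 2 * r := by
      linarith [dist_triangle_left (γ s) (γ t) x]
    rcases le_or_gt δ (circleDist L s t) with hlarge | hsmall
    · have hexpand : ε * circleDist L s t < dist (γ s) (γ t) := hlsi s hs t ht hlarge
      have hlt : circleDist L s t < 2 * r / ε := by
        rw [lt_div_iff₀ hε0]
        linarith
      linarith
    · linarith
  calc volume {t ∈ Icc 0 L | dist x (γ t) ≤ r}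
      ≤ volume {t ∈ Icc 0 L | circleDist L s t ≤ 2 * r + 2 * r / ε} :=
        measure_mono fun t ⟨ht, htx⟩ => ⟨ht, hnear t ht htx⟩
    _ ≤ ENNReal.ofReal (2 * (2 * r + 2 * r / ε)) :=
        volume_setOf_circleDist_le hs (by positivity)
    _ = ENNReal.ofReal (4 * (1 + ε⁻¹) * r) := by ring_nf

/-- Large-scale invertibility implies the ball growth condition for radii `r ≥ δ/2`. -/
theorem stmt3 {E : Type*} [MetricSpace E] (L δ ε : ℝ)
    (hδ : 0 < δ) (hε0 : 0 < ε) (hε1 : ε < 1) (hL : 0 ≤ L)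
    (γ : ℝ → E) (hlip : LipschitzOnWith 1 γ (Set.Icc 0 L))
    (hlsi : ∀ s ∈ Set.Icc (0:ℝ) L, ∀ t ∈ Set.Icc (0:ℝ) L,
      δ ≤ min |s - t| (L - |s - t|) →
        ε * min |s - t| (L - |s - t|) < dist (γ s) (γ t)) :
    ∀ x : E, ∀ r : ℝ, δ / 2 ≤ r →
      volume {t ∈ Set.Icc (0:ℝ) L | dist x (γ t) ≤ r}
        ≤ ENNReal.ofReal (4 * (1 + ε⁻¹) * r) :=
  stmt3_general L δ ε hε0 γ hlsi
end

section
/- Let γ : [0, L] → E be a Lipschitz curve parametrized by arc length, f : E → ℝ bounded Lipschitz with ‖f‖_∞ ≤ C and Lip(f) ≤ C, and π, π' : E → ℝ Lipschitz with Lip(π), Lip(π') ≤ C. Let Q ⊆ E be a finite set with sup_{q∈Q} |π(q) − π'(q)| ≤ ε, fix m ∈ ℕ, and set s_i = iL/m. Then |∫₀^L f(γ(t)) d((π−π')∘γ)(t)| ≤ C·∑_{i=1}^m min{2CL/m, 2ε + 2C(d(γ(s_i), Q) + d(γ(s_{i−1}), Q))} + 2C²L²/m, where d(x, Q) = min_{q∈Q}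 d(x, q). -/
/-!
On each piece `[a, b]` of the partition, freezing `f ∘ γ` at the right endpoint turns the integral
into `f (γ b) * (φ b - φ a)` with `φ = (π - π') ∘ γ`, because a Lipschitz function is absolutely
continuous and hence the integral of its derivative is its increment; the error is at most
`Lip(f ∘ γ) · Lip(φ) · (b - a)²`. The increment of `φ` is bounded either by its Lipschitz constant
or, comparing both endpoints with points of `Q`, by `2ε + 2C (d(γ a, Q) + d(γ b, Q))`.
-/

open MeasureTheory Set NNReal

theorem Finset.sum_Icc_one_eq_sum_range {M : Type*} [AddCommMonoid M] (f : ℕ → M) (m : ℕ) :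
    ∑ i ∈ Finset.Icc 1 m, f i = ∑ k ∈ Finset.range m, f (k + 1) := by
  rw [Finset.range_eq_Ico, Finset.sum_Ico_add', zero_add, Finset.Ico_add_one_right_eq_Icc]

section IntegralAgainstDeriv

variable {u φ : ℝ → ℝ} {Ku Kφ : ℝ≥0}

theorem intervalIntegrable_mul_deriv_of_lipschitzOnWith {a b : ℝ} (hab : a ≤ b)
    (hu : LipschitzOnWith Ku u (Icc a b)) (hφ : LipschitzOnWith Kφ φ (Icc a b)) :
    IntervalIntegrable (fun t => u t * deriv φ t) volume a b := by
  rw [← uIcc_of_le hab] at hu hφ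
  exact hφ.absolutelyContinuousOnInterval.intervalIntegrable_deriv.continuousOn_mul hu.continuousOn

theorem abs_integral_mul_deriv_sub_le {a b : ℝ} (hab : a ≤ b)
    (hu : LipschitzOnWith Ku u (Icc a b)) (hφ : LipschitzOnWith Kφ φ (Icc a b)) :
    |(∫ t in a..b, u t * deriv φ t) - u b * (φ b - φ a)| ≤ Ku * Kφ * (b - a) ^ 2 := by
  have hac := (uIcc_of_le hab ▸ hφ).absolutelyContinuousOnInterval
  rw [← hac.integral_deriv_eq_sub, ← intervalIntegral.integral_const_mul,
    ← intervalIntegral.integral_sub (intervalIntegrable_mul_deriv_of_lipschitzOnWith hab hu hφ)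
      (hac.intervalIntegrable_deriv.const_mul _)]
  simp_rw [← sub_mul]
  have hbound : ∀ᵐ t, t ∈ uIoc a b → ‖(u t - u b) * deriv φ t‖ ≤ Ku * (b - a) * Kφ := by
    filter_upwards [Measure.ae_ne volume b] with t htb ht
    rw [uIoc_of_le hab] at ht
    rw [norm_mul]
    gcongr
    · calc ‖u t - u b‖ ≤ Ku * dist t b :=
            hu.dist_le_mul t (Ioc_subset_Icc_self ht) b (right_mem_Icc.2 hab)
        _ ≤ Ku * (b - a) := by
          rw [Real.dist_eq, abs_of_nonpos (by linarith [ht.2])]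
          gcongr
          linarith [ht.1]
    · exact norm_deriv_le_of_lipschitzOn (Icc_mem_nhds ht.1 (lt_of_le_of_ne ht.2 htb)) hφ
  have := intervalIntegral.norm_integral_le_of_norm_le_const_ae hbound
  rw [abs_of_nonneg (sub_nonneg.2 hab)] at this
  rw [← Real.norm_eq_abs]
  linarith

theorem abs_integral_mul_deriv_le_sum {s : ℕ → ℝ} (hs : Monotone s) {m : ℕ}
    (hu : LipschitzOnWith Ku u (Icc (s 0) (s m))) (hφ : LipschitzOnWith Kφ φ (Icc (s 0) (s m))) :
    |∫ t in s 0..s m, u t * deriv φ t| ≤ ∑ k ∈ Finset.range m,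
      (|u (s (k + 1))| * min (Kφ * (s (k + 1) - s k)) |φ (s (k + 1)) - φ (s k)|
        + Ku * Kφ * (s (k + 1) - s k) ^ 2) := by
  have hsub : ∀ k < m, Icc (s k) (s (k + 1)) ⊆ Icc (s 0) (s m) := fun k hk =>
    Icc_subset_Icc (hs k.zero_le) (hs hk)
  rw [← intervalIntegral.sum_integral_adjacent_intervals fun k hk =>
    intervalIntegrable_mul_deriv_of_lipschitzOnWith (hs k.le_succ)
      (hu.mono (hsub k hk)) (hφ.mono (hsub k hk))]
  refine (Finset.abs_sum_le_sum_abs _ _).trans (Finset.sum_le_sum fun k hk => ?_)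
  have hk := Finset.mem_range.1 hk
  have hab := hs k.le_succ
  have hincr : |φ (s (k + 1)) - φ (s k)| ≤ Kφ * (s (k + 1) - s k) := by
    have := (hφ.mono (hsub k hk)).dist_le_mul _ (right_mem_Icc.2 hab) _ (left_mem_Icc.2 hab)
    rwa [Real.dist_eq, Real.dist_eq, abs_of_nonneg (sub_nonneg.2 hab)] at this
  have := abs_integral_mul_deriv_sub_le hab (hu.mono (hsub k hk)) (hφ.mono (hsub k hk))
  rw [min_eq_right hincr, ← abs_mul]
  linarith [abs_sub_abs_le_abs_sub (∫ t in s k..s (k + 1), u t * deriv φ t)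
    (u (s (k + 1)) * (φ (s (k + 1)) - φ (s k)))]

theorem abs_integral_mul_deriv_le_sum_of_uniform {L : ℝ} (hL : 0 ≤ L) {m : ℕ} (hm : 0 < m)
    {s : ℕ → ℝ} (hs : ∀ i, s i = i * L / m)
    (hu : LipschitzOnWith Ku u (Icc 0 L)) (hφ : LipschitzOnWith Kφ φ (Icc 0 L)) :
    |∫ t in 0..L, u t * deriv φ t| ≤ ∑ i ∈ Finset.Icc 1 m,
      |u (s i)| * min (Kφ * L / m) |φ (s i) - φ (s (i - 1))| + Ku * Kφ * L ^ 2 / m := by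
  have hs_mono : Monotone s := fun i j hij => by rw [hs, hs]; gcongr
  have hs_step : ∀ k, s (k + 1) - s k = L / m := fun k => by rw [hs, hs]; push_cast; ring
  have hs_ends : s 0 = 0 ∧ s m = L := by simp [hs, hm.ne']
  have key := abs_integral_mul_deriv_le_sum hs_mono (m := m)
    (hs_ends.1 ▸ hs_ends.2 ▸ hu) (hs_ends.1 ▸ hs_ends.2 ▸ hφ)
  rw [hs_ends.1, hs_ends.2] at key
  refine key.trans_eq ?_
  simp only [hs_step, Finset.sum_add_distrib, Finset.sum_const, Finset.card_range, nsmul_eq_mul,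
    Finset.sum_Icc_one_eq_sum_range, Nat.add_sub_cancel, mul_div_assoc]
  field_simp

end IntegralAgainstDeriv

theorem lipschitzWith_of_abs_sub_le {E : Type*} [PseudoMetricSpace E] {f : E → ℝ} {C : ℝ≥0}
    (hf : ∀ x y, |f x - f y| ≤ C * dist x y) : LipschitzWith C f :=
  .of_dist_le_mul fun x y => Real.dist_eq (f x) (f y) ▸ hf x y

theorem LipschitzWith.abs_le_add_mul_infDist {E : Type*} [PseudoMetricSpace E] {φ : E → ℝ}
    {K : ℝ≥0} (hφ : LipschitzWith K φ) {Q : Set E} (hQ : Q.Nonempty) {ε : ℝ}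
    (hQε : ∀ q ∈ Q, |φ q| ≤ ε) (x : E) : |φ x| ≤ ε + K * Metric.infDist x Q := by
  have := hQ.to_subtype
  rw [Metric.infDist_eq_iInf, Real.mul_iInf_of_nonneg K.coe_nonneg, ← sub_le_iff_le_add']
  refine le_ciInf fun q => ?_
  have := hφ.dist_le_mul x q
  rw [Real.dist_eq] at this
  linarith [abs_sub_abs_le_abs_sub (φ x) (φ q), hQε q q.2]

theorem LipschitzWith.abs_sub_le_add_mul_infDist {E : Type*} [PseudoMetricSpace E] {φ : E → ℝ}
    {K : ℝ≥0} (hφ : LipschitzWith K φ) {Q : Set E} (hQ : Q.Nonempty) {ε : ℝ}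
    (hQε : ∀ q ∈ Q, |φ q| ≤ ε) (x y : E) :
    |φ x - φ y| ≤ 2 * ε + K * (Metric.infDist x Q + Metric.infDist y Q) := by
  linarith [abs_sub (φ x) (φ y), hφ.abs_le_add_mul_infDist hQ hQε x,
    hφ.abs_le_add_mul_infDist hQ hQε y]

theorem stmt11_general {E : Type*} [MetricSpace E]
    (L C ε : ℝ) (hL : 0 ≤ L) (hC : 0 ≤ C)
    (γ : ℝ → E) (hγ : LipschitzOnWith 1 γ (Set.Icc 0 L))
    (f π π' : E → ℝ)
    (hfb : ∀ x, |f x| ≤ C) (hfl : ∀ x y, |f x - f y| ≤ C * dist x y)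
    (hπ : ∀ x y, |π x - π y| ≤ C * dist x y)
    (hπ' : ∀ x y, |π' x - π' y| ≤ C * dist x y)
    (Q : Set E) (hQne : Q.Nonempty)
    (hεQ : ∀ q ∈ Q, |π q - π' q| ≤ ε)
    (m : ℕ) (hm : 0 < m) (s : ℕ → ℝ) (hs : ∀ i, s i = (i : ℝ) * L / m) :
    |∫ t in (0:ℝ)..L, f (γ t) * deriv (fun u => π (γ u) - π' (γ u)) t|
      ≤ C * ∑ i ∈ Finset.Icc 1 m,
          min (2 * C * L / m)
            (2 * ε + 2 * C * (Metric.infDist (γ (s i)) Q + Metric.infDist (γ (s (i - 1))) Q))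
        + 2 * C ^ 2 * L ^ 2 / m := by
  lift C to ℝ≥0 using hC
  have hdiff : LipschitzWith (C + C) fun x => π x - π' x :=
    (lipschitzWith_of_abs_sub_le hπ).sub (lipschitzWith_of_abs_sub_le hπ')
  refine (abs_integral_mul_deriv_le_sum_of_uniform hL hm hs
    ((lipschitzWith_of_abs_sub_le hfl).comp_lipschitzOnWith hγ)
    (hdiff.comp_lipschitzOnWith hγ)).trans (add_le_add ?_ (le_of_eq (by push_cast; ring)))
  rw [Finset.mul_sum]
  refine Finset.sum_le_sum fun i _ => ?_
  gcongr
  · exact hfb _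
  · push_cast; linarith
  · exact (hdiff.abs_sub_le_add_mul_infDist hQne hεQ _ _).trans_eq (by push_cast; ring)

/-- Quantitative estimate for the action of the current of a curve on `(f, π − π')`,
in terms of the distances of sample points to a finite set `Q` on which `π` and `π'`
are `ε`-close. -/
theorem stmt11 {E : Type*} [MetricSpace E]
    (L C ε : ℝ) (hL : 0 ≤ L) (hC : 0 ≤ C) (hε : 0 ≤ ε)
    (γ : ℝ → E) (hγ : LipschitzOnWith 1 γ (Set.Icc 0 L))
    (f π π' : E → ℝ)
    (hfb : ∀ x, |f x| ≤ C) (hfl : ∀ x y, |f x - f y| ≤ C * dist x y)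
    (hπ : ∀ x y, |π x - π y| ≤ C * dist x y)
    (hπ' : ∀ x y, |π' x - π' y| ≤ C * dist x y)
    (Q : Set E) (hQfin : Q.Finite) (hQne : Q.Nonempty)
    (hεQ : ∀ q ∈ Q, |π q - π' q| ≤ ε)
    (m : ℕ) (hm : 0 < m) (s : ℕ → ℝ) (hs : ∀ i, s i = (i : ℝ) * L / m) :
    |∫ t in (0:ℝ)..L, f (γ t) * deriv (fun u => π (γ u) - π' (γ u)) t|
      ≤ C * ∑ i ∈ Finset.Icc 1 m,
          min (2 * C * L / m)
            (2 * ε + 2 * C * (Metric.infDist (γ (s i)) Q + Metric.infDist (γ (s (i - 1))) Q))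
        + 2 * C ^ 2 * L ^ 2 / m :=
  stmt11_general L C ε hL hC γ hγ f π π' hfb hfl hπ hπ' Q hQne hεQ m hm s hs
end
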